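/- Let A be a seminormed ring. Every spectrally reduced prime ideal of A contains a spectrally reduced prime ideal that is minimal with respect to inclusion among the spectrally reduced prime ideals of A. -/

import Mathlib

/-!
A bounded power-multiplicative seminorm is automatically bounded by the norm itself (bound
`φ (f ^ n) ≤ C ‖f‖ ^ n` and take `n`-th roots). Hence any nonempty family of them has a pointwise
supremum, which is again bounded and power-multiplicative and whose kernel is the intersection of
the kernels. So spectrally reduced ideals are stable under nonempty intersections, and the
intersection of a chain of primes is prime; Zorn's lemma applied downwards from `p` gives a
minimal spectrally reduced prime below `p`.
-/

open Filter Topology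

/-- A bounded power-multiplicative (nonarchimedean, submultiplicative) ring seminorm
on a seminormed commutative ring. -/
structure IsBddPowMulSeminorm {A : Type*} [SeminormedCommRing A] (φ : A → ℝ) : Prop where
  nonneg : ∀ f, 0 ≤ φ f
  map_zero : φ 0 = 0
  map_one : φ 1 = 1
  map_neg : ∀ f, φ (-f) = φ f
  nonarch : ∀ f g, φ (f + g) ≤ max (φ f) (φ g)
  submul : ∀ f g, φ (f * g) ≤ φ f * φ g
  pow_mul : ∀ f, ∀ n : ℕ, 1 ≤ n → φ (f ^ n) = φ f ^ n
  bounded : ∃ C > 0, ∀ f, φ f ≤ C * ‖f‖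

/-- An ideal is spectrally reduced if it is the kernel of some bounded
power-multiplicative seminorm. -/
def IsSpectrallyReduced {A : Type*} [SeminormedCommRing A] (I : Ideal A) : Prop :=
  ∃ φ : A → ℝ, IsBddPowMulSeminorm φ ∧ ∀ f, f ∈ I ↔ φ f = 0

namespace IsBddPowMulSeminorm

variable {A : Type*} [SeminormedCommRing A]

theorem le_norm {φ : A → ℝ} (hφ : IsBddPowMulSeminorm φ) (f : A) : φ f ≤ ‖f‖ :=
  contraction_of_isPowMul_of_boundedWrt (SeminormedRing.toRingSeminorm A)
    (fun a _ hn => hφ.pow_mul a _ hn) (f := RingHom.id A) hφ.bounded f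

theorem bddAbove_range {ι : Type*} {ψ : ι → A → ℝ} (hψ : ∀ i, IsBddPowMulSeminorm (ψ i))
    (f : A) : BddAbove (Set.range fun i => ψ i f) :=
  ⟨‖f‖, Set.forall_mem_range.2 fun i => (hψ i).le_norm f⟩

theorem iSup {ι : Type*} [Nonempty ι] {ψ : ι → A → ℝ} (hψ : ∀ i, IsBddPowMulSeminorm (ψ i)) :
    IsBddPowMulSeminorm fun f => ⨆ i, ψ i f := by
  have le_iSup (f : A) (i : ι) : ψ i f ≤ ⨆ i, ψ i f := le_ciSup (bddAbove_range hψ f) i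
  have nonneg (f : A) : 0 ≤ ⨆ i, ψ i f := Real.iSup_nonneg fun i => (hψ i).nonneg f
  refine
    { nonneg := nonneg
      map_zero := by simp only [fun i => (hψ i).map_zero, ciSup_const]
      map_one := by simp only [fun i => (hψ i).map_one, ciSup_const]
      map_neg := fun f => by simp only [fun i => (hψ i).map_neg f]
      nonarch := fun f g => ciSup_le fun i =>
        ((hψ i).nonarch f g).trans (max_le_max (le_iSup f i) (le_iSup g i))
      submul := fun f g => ciSup_le fun i => ((hψ i).submul f g).trans <|
        mul_le_mul (le_iSup f i) (le_iSup g i) ((hψ i).nonneg g) (nonneg f)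
      pow_mul := fun f n hn => by
        simp only [Real.iSup_pow (fun i => (hψ i).nonneg f), fun i => (hψ i).pow_mul f n hn]
      bounded := ⟨1, one_pos, fun f => by
        simpa only [one_mul] using ciSup_le fun i => (hψ i).le_norm f⟩ }

end IsBddPowMulSeminorm

theorem IsSpectrallyReduced.sInf {A : Type*} [SeminormedCommRing A] {S : Set (Ideal A)}
    (hS : S.Nonempty) (hred : ∀ I ∈ S, IsSpectrallyReduced I) : IsSpectrallyReduced (sInf S) := by
  choose ψ hψ hker using fun I : S => hred I I.2
  have : Nonempty S := hS.to_subtype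
  refine ⟨fun f => ⨆ I, ψ I f, IsBddPowMulSeminorm.iSup hψ, fun f => ?_⟩
  have iSup_eq_zero : (⨆ I, ψ I f) = 0 ↔ ∀ I, ψ I f = 0 :=
    ⟨fun h I => le_antisymm (h ▸ le_ciSup (IsBddPowMulSeminorm.bddAbove_range hψ f) I)
        ((hψ I).nonneg f),
      fun h => by simp only [h, ciSup_const]⟩
  rw [iSup_eq_zero, Ideal.mem_sInf]
  exact ⟨fun hf I => (hker I f).1 (hf I.2), fun hf I hI => (hker ⟨I, hI⟩ f).2 (hf _)⟩

theorem isPrime_and_isSpectrallyReduced_sInf_of_isChain {A : Type*} [SeminormedCommRing A]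
    {S : Set (Ideal A)} (hS : S.Nonempty) (hchain : IsChain (· ≤ ·) S)
    (hred : ∀ I ∈ S, I.IsPrime ∧ IsSpectrallyReduced I) :
    (sInf S).IsPrime ∧ IsSpectrallyReduced (sInf S) :=
  ⟨Ideal.sInf_isPrime_of_isChain hS hchain fun I hI => (hred I hI).1,
    IsSpectrallyReduced.sInf hS fun I hI => (hred I hI).2⟩

theorem exists_minimal_spectrally_reduced_prime_le_general
    {A : Type*} [SeminormedCommRing A]
    (p : Ideal A) (hp : p.IsPrime) (hps : IsSpectrallyReduced p) :
    ∃ q : Ideal A, q.IsPrime ∧ IsSpectrallyReduced q ∧ q ≤ p ∧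
      ∀ r : Ideal A, r.IsPrime → IsSpectrallyReduced r → r ≤ q → r = q := by
  let S : Set (Ideal A)ᵒᵈ := {q | q.ofDual.IsPrime ∧ IsSpectrallyReduced q.ofDual}
  have chain_bdd : ∀ c ⊆ S, IsChain (· ≤ ·) c → ∀ y ∈ c, ∃ lb ∈ S, ∀ z ∈ c, z ≤ lb :=
    fun c hcS hc y hy =>
      ⟨OrderDual.toDual (sInf (OrderDual.ofDual '' c)),
        isPrime_and_isSpectrallyReduced_sInf_of_isChain ⟨_, y, hy, rfl⟩
          (hc.symm.image_of_map_rel _ _ OrderDual.ofDual fun _ _ h => h)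
          (Set.forall_mem_image.2 fun _ hz => hcS hz),
        fun _ hz => sInf_le (Set.mem_image_of_mem OrderDual.ofDual hz)⟩
  obtain ⟨q, hqp, ⟨hq, hqs⟩, hmin⟩ :=
    zorn_le_nonempty₀ S chain_bdd (OrderDual.toDual p) (show _ ∈ S from ⟨hp, hps⟩)
  exact ⟨q.ofDual, hq, hqs, hqp, fun r hr hrs hrq =>
    le_antisymm hrq (hmin (y := OrderDual.toDual r) ⟨hr, hrs⟩ hrq)⟩

/-- Every spectrally reduced prime ideal of a seminormed ring contains a minimal
spectrally reduced prime ideal. -/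
theorem exists_minimal_spectrally_reduced_prime_le
    {A : Type*} [SeminormedCommRing A] [NormOneClass A]
    (hA : IsNonarchimedean (fun a : A => ‖a‖))
    (p : Ideal A) (hp : p.IsPrime) (hps : IsSpectrallyReduced p) :
    ∃ q : Ideal A, q.IsPrime ∧ IsSpectrallyReduced q ∧ q ≤ p ∧
      ∀ r : Ideal A, r.IsPrime → IsSpectrallyReduced r → r ≤ q → r = q :=
  exists_minimal_spectrally_reduced_prime_le_general p hp hps
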